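/- Let α ∈ ℝ and y₀ > 0 satisfy 1 + 2αy₀ > 0 and 1 + αy₀ > 0. Define Y : ℝ → ℝ by Y(x) = y₀·( αy₀ + √( (αy₀ + 1)² + (1 + 2αy₀)·x² ) ) / (1 + 2αy₀). Then Y is well-defined (the radicand is strictly positive), Y(0) = y₀, and for every x ∈ ℝ the differential identity Y'(x)·( 1 + x² + α·Y(x) ) = x·Y(x) holds; that is, Y solves the ODE dy/dx = x·y/(1 + x² + α·y) with y(0) = y₀. -/

import Mathlib

/-
With `a = α y₀`, `c = 1 + 2a` and `R(x) = (a + 1)² + c x²`, the identity `(a + 1)² = a² + c` gives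
`1 + x² + α Y(x) = √R (a + √R) / c`, while `Y'(x) = y₀ x / √R`; their product is `x Y(x)`.
-/

open Real

/-- The explicit solution `Y` of `dy/dx = xy/(1 + x² + αy)`, `y(0) = y₀`, used to bound
the slow variable in the delayed-stability lemma for the aircraft model. -/
noncomputable def aircraftY (α y₀ x : ℝ) : ℝ :=
  y₀ * (α * y₀ + Real.sqrt ((α * y₀ + 1) ^ 2 + (1 + 2 * α * y₀) * x ^ 2)) / (1 + 2 * α * y₀)

theorem hasDerivAt_sqrt_add_mul_sq {p q x : ℝ} (h : 0 < p + q * x ^ 2) :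
    HasDerivAt (fun t => √(p + q * t ^ 2)) (q * x / √(p + q * x ^ 2)) x := by
  have hp : HasDerivAt (fun t => p + q * t ^ 2) (q * (2 * x)) x := by
    simpa using ((hasDerivAt_pow 2 x).const_mul q).const_add p
  convert hp.sqrt h.ne' using 1
  field_simp

section aircraftY

variable {α y₀ : ℝ}

theorem aircraftY_radicand_pos (h1 : 0 < 1 + 2 * α * y₀) (h2 : 0 < 1 + α * y₀) (x : ℝ) :
    0 < (α * y₀ + 1) ^ 2 + (1 + 2 * α * y₀) * x ^ 2 :=
  add_pos_of_pos_of_nonneg (pow_pos (h2.trans_eq (add_comm _ _)) 2)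
    (mul_nonneg h1.le (sq_nonneg x))

theorem aircraftY_zero (h1 : 0 < 1 + 2 * α * y₀) (h2 : 0 < 1 + α * y₀) :
    aircraftY α y₀ 0 = y₀ := by
  have hsqrt : √((α * y₀ + 1) ^ 2 + (1 + 2 * α * y₀) * 0 ^ 2) = α * y₀ + 1 := by
    rw [zero_pow two_ne_zero, mul_zero, add_zero, sqrt_sq (h2.trans_eq (add_comm _ _)).le]
  rw [aircraftY, hsqrt, div_eq_iff h1.ne']
  ring

theorem hasDerivAt_aircraftY (h1 : 1 + 2 * α * y₀ ≠ 0) {x : ℝ}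
    (hR : 0 < (α * y₀ + 1) ^ 2 + (1 + 2 * α * y₀) * x ^ 2) :
    HasDerivAt (aircraftY α y₀)
      (y₀ * x / √((α * y₀ + 1) ^ 2 + (1 + 2 * α * y₀) * x ^ 2)) x := by
  refine ((((hasDerivAt_sqrt_add_mul_sq hR).const_add (α * y₀)).const_mul y₀).div_const
    (1 + 2 * α * y₀)).congr_deriv ?_
  set c := 1 + 2 * α * y₀
  field_simp

theorem one_add_sq_add_mul_aircraftY (h1 : 1 + 2 * α * y₀ ≠ 0) {x : ℝ}
    (hR : 0 ≤ (α * y₀ + 1) ^ 2 + (1 + 2 * α * y₀) * x ^ 2) :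
    1 + x ^ 2 + α * aircraftY α y₀ x =
      √((α * y₀ + 1) ^ 2 + (1 + 2 * α * y₀) * x ^ 2) *
        (α * y₀ + √((α * y₀ + 1) ^ 2 + (1 + 2 * α * y₀) * x ^ 2)) / (1 + 2 * α * y₀) := by
  have hs := sq_sqrt hR
  rw [aircraftY]
  set s := √((α * y₀ + 1) ^ 2 + (1 + 2 * α * y₀) * x ^ 2)
  set c := 1 + 2 * α * y₀ with hc
  field_simp
  linear_combination (-1 : ℝ) * hs + (1 + x ^ 2) * hc

end aircraftY

theorem stmt11_general (α y₀ : ℝ)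
    (h1 : 0 < 1 + 2 * α * y₀) (h2 : 0 < 1 + α * y₀) :
    (∀ x : ℝ, 0 < (α * y₀ + 1) ^ 2 + (1 + 2 * α * y₀) * x ^ 2) ∧
    aircraftY α y₀ 0 = y₀ ∧
    (∀ x : ℝ, ∃ d : ℝ,
      HasDerivAt (aircraftY α y₀) d x ∧
      d * (1 + x ^ 2 + α * aircraftY α y₀ x) = x * aircraftY α y₀ x) := by
  refine ⟨aircraftY_radicand_pos h1 h2, aircraftY_zero h1 h2, fun x => ?_⟩
  have hR := aircraftY_radicand_pos h1 h2 x
  refine ⟨_, hasDerivAt_aircraftY h1.ne' hR, ?_⟩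
  rw [one_add_sq_add_mul_aircraftY h1.ne' hR.le, aircraftY]
  have hs : √((α * y₀ + 1) ^ 2 + (1 + 2 * α * y₀) * x ^ 2) ≠ 0 := (sqrt_pos.mpr hR).ne'
  set s := √((α * y₀ + 1) ^ 2 + (1 + 2 * α * y₀) * x ^ 2)
  field_simp

/-- `Y` is well-defined (positive radicand), satisfies `Y(0) = y₀`, and solves
`Y'(x)·(1 + x² + α·Y(x)) = x·Y(x)` for every `x`. -/
theorem stmt11 (α y₀ : ℝ) (hy₀ : 0 < y₀)
    (h1 : 0 < 1 + 2 * α * y₀) (h2 : 0 < 1 + α * y₀) :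
    (∀ x : ℝ, 0 < (α * y₀ + 1) ^ 2 + (1 + 2 * α * y₀) * x ^ 2) ∧
    aircraftY α y₀ 0 = y₀ ∧
    (∀ x : ℝ, ∃ d : ℝ,
      HasDerivAt (aircraftY α y₀) d x ∧
      d * (1 + x ^ 2 + α * aircraftY α y₀ x) = x * aircraftY α y₀ x) :=
  stmt11_general α y₀ h1 h2
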